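/- For a rank-2 mesh tensor field $w$, with Cartesian components $\tilde w^{jh}_{,a} = (J_a)^j_l (J_a)^h_p w^{lp}_{,a}$ and the discrete covariant derivative $CD w^{lp} = \sum_i \phi_i [ (w^{lp}_{k_i^+} - w^{lp}_{k_i^-}) + (J_c^{-1})^l_m (J_c^{-1})^p_q ( (J_{k_i^+})^m_n (J_{k_i^+})^q_r - (J_c)^m_n (J_c)^q_r ) w^{nr}_{k_i^+} + (J_c^{-1})^l_m (J_c^{-1})^p_q ( (J_c)^m_n (J_c)^q_r - (J_{k_i^-})^m_n (J_{k_i^-})^q_r ) w^{nr}_{k_i^-} ]$, it holds that $D \tilde w^{jh} = (J_c)^j_l (J_c)^h_p \, CD w^{lp}$. -/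
import Mathlib
open Matrix

lemma entry_conj {d : ℕ} (M : Matrix (Fin d) (Fin d) ℝ) (X : Matrix (Fin d) (Fin d) ℝ)
    (j h : Fin d) :
    ∑ l, ∑ p, M j l * M h p * X l p = (M * X * Mᵀ) j h := by
  simp only [Matrix.mul_apply, Matrix.transpose_apply, Finset.sum_mul]
  rw [Finset.sum_comm]
  exact Finset.sum_congr rfl fun l _ => Finset.sum_congr rfl fun p _ => by ring

lemma collapse {d : ℕ} (M : Matrix (Fin d) (Fin d) ℝ) (hM : IsUnit M.det)
    (j h : Fin d) (g : Fin d → Fin d → ℝ) :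
    ∑ l, ∑ p, M j l * M h p * (∑ m, ∑ q, M⁻¹ l m * M⁻¹ p q * g m q) = g j h := by
  have h1 : ∀ l p, (∑ m, ∑ q, M⁻¹ l m * M⁻¹ p q * g m q)
      = (M⁻¹ * Matrix.of g * M⁻¹ᵀ) l p := fun l p => entry_conj M⁻¹ (Matrix.of g) l p
  simp only [h1]
  rw [entry_conj]
  have key : M * (M⁻¹ * Matrix.of g * M⁻¹ᵀ) * Mᵀ = Matrix.of g := by
    rw [Matrix.transpose_nonsing_inv]
    have h2 : Mᵀ⁻¹ * Mᵀ = 1 := Matrix.nonsing_inv_mul _ (by simpa using hM)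
    have h3 : M * M⁻¹ = 1 := Matrix.mul_nonsing_inv _ hM
    calc M * (M⁻¹ * Matrix.of g * Mᵀ⁻¹) * Mᵀ
        = (M * M⁻¹) * Matrix.of g * (Mᵀ⁻¹ * Mᵀ) := by noncomm_ring
      _ = Matrix.of g := by rw [h2, h3, Matrix.one_mul, Matrix.mul_one]
  rw [key]; rfl

lemma collapse4 {d : ℕ} (M : Matrix (Fin d) (Fin d) ℝ) (hM : IsUnit M.det)
    (j h : Fin d) (A B C E : Matrix (Fin d) (Fin d) ℝ) (w' : Fin d → Fin d → ℝ) :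
    ∑ l, ∑ p, M j l * M h p * (∑ m, ∑ q, ∑ n, ∑ r,
        M⁻¹ l m * M⁻¹ p q * (A m n * B q r - C m n * E q r) * w' n r)
    = ∑ n, ∑ r, (A j n * B h r - C j n * E h r) * w' n r := by
  have h1 : ∀ l p : Fin d, (∑ m, ∑ q, ∑ n, ∑ r,
        M⁻¹ l m * M⁻¹ p q * (A m n * B q r - C m n * E q r) * w' n r)
      = ∑ m, ∑ q, M⁻¹ l m * M⁻¹ p q *
          (∑ n, ∑ r, (A m n * B q r - C m n * E q r) * w' n r) := by
    intro l p
    refine Finset.sum_congr rfl fun m _ => Finset.sum_congr rfl fun q _ => ?_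
    simp only [Finset.mul_sum]
    exact Finset.sum_congr rfl fun n _ => Finset.sum_congr rfl fun r _ => by ring
  simp only [h1]
  exact collapse M hM j h _

lemma sum_swap3 {N d : ℕ} (f : Fin d → Fin d → Fin N → ℝ) :
    ∑ l, ∑ p, ∑ i, f l p i = ∑ i, ∑ l, ∑ p, f l p i := by
  rw [show (∑ l, ∑ p, ∑ i, f l p i) = ∑ l, ∑ i, ∑ p, f l p i from
    Finset.sum_congr rfl fun l _ => Finset.sum_comm]
  exact Finset.sum_comm

theorem discrete_covariant_derivative_rank2_transform
    {Mesh : Type*} {d N : ℕ}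
    (J : Mesh → Matrix (Fin d) (Fin d) ℝ)
    (hJ : ∀ a, IsUnit (J a).det)
    (φ : Fin N → ℝ) (kp km : Fin N → Mesh) (c : Mesh)
    (D : (Mesh → ℝ) → ℝ)
    (hD : ∀ f : Mesh → ℝ, D f = ∑ i, φ i * (f (kp i) - f (km i)))
    (w : Mesh → Fin d → Fin d → ℝ)
    (CD : Fin d → Fin d → ℝ)
    (hCD : ∀ l p, CD l p = ∑ i, φ i *
      ((w (kp i) l p - w (km i) l p)
        + ∑ m, ∑ q, ∑ n, ∑ r, (J c)⁻¹ l m * (J c)⁻¹ p q *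
            (J (kp i) m n * J (kp i) q r - J c m n * J c q r) * w (kp i) n r
        + ∑ m, ∑ q, ∑ n, ∑ r, (J c)⁻¹ l m * (J c)⁻¹ p q *
            (J c m n * J c q r - J (km i) m n * J (km i) q r) * w (km i) n r)) :
    ∀ j h, D (fun a => ∑ l, ∑ p, J a j l * J a h p * w a l p)
      = ∑ l, ∑ p, J c j l * J c h p * CD l p := by
  intro j h
  rw [hD]
  simp only [hCD, Finset.mul_sum]
  rw [sum_swap3]
  apply Finset.sum_congr rfl
  intro i _
  have pull : (∑ l, ∑ p, J c j l * J c h p *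
      (φ i * ((w (kp i) l p - w (km i) l p)
        + ∑ m, ∑ q, ∑ n, ∑ r, (J c)⁻¹ l m * (J c)⁻¹ p q *
            (J (kp i) m n * J (kp i) q r - J c m n * J c q r) * w (kp i) n r
        + ∑ m, ∑ q, ∑ n, ∑ r, (J c)⁻¹ l m * (J c)⁻¹ p q *
            (J c m n * J c q r - J (km i) m n * J (km i) q r) * w (km i) n r)))
      = φ i * ∑ l, ∑ p, J c j l * J c h p *
      ((w (kp i) l p - w (km i) l p)
        + ∑ m, ∑ q, ∑ n, ∑ r, (J c)⁻¹ l m * (J c)⁻¹ p q *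
            (J (kp i) m n * J (kp i) q r - J c m n * J c q r) * w (kp i) n r
        + ∑ m, ∑ q, ∑ n, ∑ r, (J c)⁻¹ l m * (J c)⁻¹ p q *
            (J c m n * J c q r - J (km i) m n * J (km i) q r) * w (km i) n r) := by
    rw [Finset.mul_sum]
    refine Finset.sum_congr rfl fun l _ => ?_
    rw [Finset.mul_sum]
    exact Finset.sum_congr rfl fun p _ => by ring
  rw [pull]
  congr 1
  simp only [mul_add, Finset.sum_add_distrib]
  rw [collapse4 (J c) (hJ c) j h (J (kp i)) (J (kp i)) (J c) (J c) (w (kp i)),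
      collapse4 (J c) (hJ c) j h (J c) (J c) (J (km i)) (J (km i)) (w (km i))]
  simp only [mul_sub, sub_mul, Finset.sum_sub_distrib]
  ring
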